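/- Let δ = (5,8,9,6,9,9) ∈ ℝ^6 in coordinates (x_12, x_13, x_14, x_23, x_24, x_34). Then d(δ, U_4) = 1; every u ∈ C(δ, U_4) satisfies u_12 < u_13 = u_23 < u_14 = u_24 = u_34 (so every l∞-closest ultrametric to δ has the rooted topology (4(3(12))); and the set C(δ, U_4) is convex with affine hull of dimension 2. -/

import Mathlib

/-- Index set for unordered pairs of distinct elements of `{1,…,n}`: ordered pairs
`(i, j)` with `i < j`. -/
abbrev PairIdx (n : ℕ) := {p : Fin n × Fin n // p.1 < p.2}

/-- A dissimilarity map on `n` elements: a point of `ℝ^(n choose 2)`, viewed as a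
real-valued function on unordered pairs of distinct elements.  The product metric on this
type is exactly the `l∞`-metric. -/
abbrev DissimMap (n : ℕ) := PairIdx n → ℝ

/-- The value of a dissimilarity map on the unordered pair `{i, j}` (zero if `i = j`). -/
def dm {n : ℕ} (u : DissimMap n) (i j : Fin n) : ℝ :=
  if h : i < j then u ⟨(i, j), h⟩ else if h' : j < i then u ⟨(j, i), h'⟩ else 0

/-- The set of ultrametrics on `n` elements. -/
def Ultrametrics (n : ℕ) : Set (DissimMap n) :=
  {u | ∀ i j k : Fin n, i ≠ j → i ≠ k → j ≠ k → dm u i j ≤ max (dm u i k) (dm u j k)}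

/-- The set of points of `S` that are `l∞`-closest to `x`. -/
noncomputable def closestPts {n : ℕ} (x : DissimMap n) (S : Set (DissimMap n)) :
    Set (DissimMap n) :=
  {y ∈ S | dist x y = Metric.infDist x S}

/-- Build a dissimilarity map from a matrix of values. -/
def ofMat {n : ℕ} (A : Matrix (Fin n) (Fin n) ℝ) : DissimMap n := fun p => A p.1.1 p.1.2

/-!
On the triangle `{1, 2, 3}` the values `8 > 6 > 5` of `δ` force every ultrametric to move some
entry by at least `1`: the largest value of an ultrametric on a triangle is attained twice, so
`u₁₃` has to meet `u₁₂` or `u₂₃`, the nearer of which sits at `δ`-distance `2`.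
Conversely, at distance `1` from `δ` the same isosceles property pins down `u₁₃ = u₂₃ = 7` and
`u₁₄ = u₂₄ = u₃₄`, so the closest ultrametrics are exactly the image of the rectangle
`(u₁₂, u₁₄) ∈ [4, 6] × [8, 10]` under an injective affine map.
-/

section DissimMap

variable {n : ℕ}

theorem dm_of_lt (u : DissimMap n) {i j : Fin n} (h : i < j) : dm u i j = u ⟨(i, j), h⟩ :=
  dif_pos h

theorem dm_comm (u : DissimMap n) (i j : Fin n) : dm u i j = dm u j i := by
  unfold dm
  rcases lt_trichotomy i j with h | rfl | h
  · simp [h, h.not_gt]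
  · rfl
  · simp [h, h.not_gt]

theorem dm_ofMat {A : Matrix (Fin n) (Fin n) ℝ} (hA : A.IsSymm) {i j : Fin n} (hij : i ≠ j) :
    dm (ofMat A) i j = A i j := by
  rcases hij.lt_or_gt with h | h
  · exact dm_of_lt _ h
  · rw [dm_comm, dm_of_lt _ h, ofMat, hA.apply]

theorem abs_dm_sub_dm_le_dist (x u : DissimMap n) (i j : Fin n) :
    |dm x i j - dm u i j| ≤ dist x u := by
  unfold dm
  split_ifs
  · exact (Real.dist_eq _ _).symm.trans_le (dist_le_pi_dist x u _)
  · exact (Real.dist_eq _ _).symm.trans_le (dist_le_pi_dist x u _)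
  · simp

theorem ofMat_mem_ultrametrics {A : Matrix (Fin n) (Fin n) ℝ} (hA : A.IsSymm)
    (h : ∀ i j k, i ≠ j → i ≠ k → j ≠ k → A i j ≤ max (A i k) (A j k)) :
    ofMat A ∈ Ultrametrics n := by
  intro i j k hij hik hjk
  rw [dm_ofMat hA hij, dm_ofMat hA hik, dm_ofMat hA hjk]
  exact h i j k hij hik hjk

namespace Ultrametrics

variable {u : DissimMap n}

theorem dm_eq_of_dm_lt (hu : u ∈ Ultrametrics n) (i j k : Fin n)
    (hij : i ≠ j) (hik : i ≠ k) (hjk : j ≠ k) (hlt : dm u i j < dm u i k) :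
    dm u i k = dm u j k := by
  have h₁ := hu i k j hik hij hjk.symm
  have h₂ := hu j k i hjk hij.symm hik.symm
  rw [dm_comm u k j] at h₁
  rw [dm_comm u j i, dm_comm u k i, max_eq_right hlt.le] at h₂
  exact ((le_max_iff.mp h₁).resolve_left hlt.not_ge).antisymm h₂

theorem sub_max_le_two_mul_dist (hu : u ∈ Ultrametrics n) (x : DissimMap n) (i j k : Fin n)
    (hij : i ≠ j) (hik : i ≠ k) (hjk : j ≠ k) :
    dm x i j - max (dm x i k) (dm x j k) ≤ 2 * dist x u := by
  have hx := fun a b => abs_le.mp (abs_dm_sub_dm_le_dist x u a b)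
  have hmax : max (dm u i k) (dm u j k) ≤ max (dm x i k) (dm x j k) + dist x u := by
    rw [← max_add_add_right]
    exact max_le_max (by linarith [hx i k]) (by linarith [hx j k])
  linarith [hx i j, hu i j k hij hik hjk]

end Ultrametrics

end DissimMap

def closestMatrix (a s : ℝ) : Matrix (Fin 4) (Fin 4) ℝ :=
  !![0, a, 7, s; a, 0, 7, s; 7, 7, 0, s; s, s, s, 0]

theorem closestMatrix_isSymm (a s : ℝ) : (closestMatrix a s).IsSymm :=
  Matrix.IsSymm.ext fun i j => by fin_cases i <;> fin_cases j <;> rfl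

def closestFamily : ℝ × ℝ →ᵃ[ℝ] DissimMap 4 where
  toFun q := ofMat (closestMatrix q.1 q.2)
  linear :=
    { toFun := fun q => ofMat !![0, q.1, 0, q.2; q.1, 0, 0, q.2; 0, 0, 0, q.2; q.2, q.2, q.2, 0]
      map_add' := fun q r => by
        ext ⟨⟨i, j⟩, _⟩; fin_cases i <;> fin_cases j <;> simp [ofMat]
      map_smul' := fun c q => by
        ext ⟨⟨i, j⟩, _⟩; fin_cases i <;> fin_cases j <;> simp [ofMat] }
  map_vadd' q r := by
    ext ⟨⟨i, j⟩, _⟩; fin_cases i <;> fin_cases j <;> simp [ofMat, closestMatrix]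

theorem closestFamily_linear_injective : Function.Injective closestFamily.linear :=
  fun _ _ h => Prod.ext (congrFun h ⟨(0, 1), by decide⟩) (congrFun h ⟨(0, 3), by decide⟩)

theorem closestFamily_mem_ultrametrics {a s : ℝ} (ha : a ≤ 7) (hs : 7 ≤ s) :
    closestFamily (a, s) ∈ Ultrametrics 4 := by
  refine ofMat_mem_ultrametrics (closestMatrix_isSymm a s) fun i j k hij hik hjk => ?_
  fin_cases i <;> fin_cases j <;> fin_cases k <;> simp_all [closestMatrix] <;> linarith

local notation "δ" => ofMat !![(0 : ℝ), 5, 8, 9; 5, 0, 6, 9; 8, 6, 0, 9; 9, 9, 9, 0]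

theorem one_le_dist_of_mem_ultrametrics {u : DissimMap 4} (hu : u ∈ Ultrametrics 4) :
    1 ≤ dist δ u := by
  have h := Ultrametrics.sub_max_le_two_mul_dist hu δ 0 2 1 (by decide) (by decide) (by decide)
  change (8 : ℝ) - max 5 6 ≤ 2 * dist δ u at h
  norm_num at h
  linarith

theorem dist_closestFamily_le {a s : ℝ} (ha : a ∈ Set.Icc 4 6) (hs : s ∈ Set.Icc 8 10) :
    dist δ (closestFamily (a, s)) ≤ 1 := by
  obtain ⟨ha₁, ha₂⟩ := ha
  obtain ⟨hs₁, hs₂⟩ := hs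
  refine (dist_pi_le_iff zero_le_one).mpr fun ⟨⟨i, j⟩, hij⟩ => ?_
  rw [Real.dist_eq, abs_le]
  fin_cases i <;> fin_cases j <;> simp_all [ofMat, closestFamily, closestMatrix] <;>
    constructor <;> linarith

theorem infDist_eq_one : Metric.infDist δ (Ultrametrics 4) = 1 := by
  have h59 : closestFamily (5, 9) ∈ Ultrametrics 4 :=
    closestFamily_mem_ultrametrics (by norm_num) (by norm_num)
  refine le_antisymm ?_ ((Metric.le_infDist ⟨_, h59⟩).mpr fun _ => one_le_dist_of_mem_ultrametrics)
  exact (Metric.infDist_le_dist_of_mem h59).trans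
    (dist_closestFamily_le (by norm_num) (by norm_num))

theorem mem_image_closestFamily_of_mem_closestPts {u : DissimMap 4}
    (hu : u ∈ closestPts δ (Ultrametrics 4)) :
    u ∈ closestFamily '' (Set.Icc 4 6 ×ˢ Set.Icc 8 10) := by
  obtain ⟨hu, hd⟩ := hu
  rw [infDist_eq_one] at hd
  have hb : ∀ i j, |dm δ i j - dm u i j| ≤ 1 := fun i j => hd ▸ abs_dm_sub_dm_le_dist δ u i j
  have h01 : |5 - dm u 0 1| ≤ 1 := hb 0 1
  have h02 : |8 - dm u 0 2| ≤ 1 := hb 0 2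
  have h03 : |9 - dm u 0 3| ≤ 1 := hb 0 3
  have h12 : |6 - dm u 1 2| ≤ 1 := hb 1 2
  rw [abs_le] at h01 h02 h03 h12
  have e012 := Ultrametrics.dm_eq_of_dm_lt hu 0 1 2
    (by decide) (by decide) (by decide) (by linarith)
  have e02 : dm u 0 2 = 7 := by linarith
  have e12 : dm u 1 2 = 7 := by linarith
  have e013 := Ultrametrics.dm_eq_of_dm_lt hu 0 1 3
    (by decide) (by decide) (by decide) (by linarith)
  have e023 := Ultrametrics.dm_eq_of_dm_lt hu 0 2 3
    (by decide) (by decide) (by decide) (by linarith)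
  refine ⟨(dm u 0 1, dm u 0 3), ⟨⟨by linarith, by linarith⟩, by linarith, by linarith⟩, ?_⟩
  ext ⟨⟨i, j⟩, hij⟩
  fin_cases i <;> fin_cases j
  all_goals
    first
      | exact absurd hij (by decide)
      | rfl
      | exact e02.symm
      | exact e12.symm
      | exact e013
      | exact e023

theorem closestPts_eq_image_closestFamily :
    closestPts δ (Ultrametrics 4) = closestFamily '' (Set.Icc 4 6 ×ˢ Set.Icc 8 10) := by
  refine Set.Subset.antisymm (fun u => mem_image_closestFamily_of_mem_closestPts) ?_
  rintro _ ⟨⟨a, s⟩, ⟨ha, hs⟩, rfl⟩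
  have hmem := closestFamily_mem_ultrametrics (by linarith [ha.2]) (by linarith [hs.1])
  refine ⟨hmem, ?_⟩
  rw [infDist_eq_one]
  exact (dist_closestFamily_le ha hs).antisymm (one_le_dist_of_mem_ultrametrics hmem)

theorem convex_closestPts : Convex ℝ (closestPts δ (Ultrametrics 4)) := by
  rw [closestPts_eq_image_closestFamily]
  exact ((convex_Icc _ _).prod (convex_Icc _ _)).affine_image closestFamily

theorem finrank_direction_affineSpan_closestPts :
    Module.finrank ℝ (affineSpan ℝ (closestPts δ (Ultrametrics 4))).direction = 2 := by
  have hspan : affineSpan ℝ (Set.Icc (4 : ℝ) 6 ×ˢ Set.Icc (8 : ℝ) 10) = ⊤ := by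
    refine affineSpan_eq_top_of_nonempty_interior ?_
    rw [((convex_Icc _ _).prod (convex_Icc _ _)).convexHull_eq, interior_prod_eq, interior_Icc,
      interior_Icc]
    exact ⟨(5, 9), by norm_num, by norm_num⟩
  rw [closestPts_eq_image_closestFamily, direction_affineSpan, ← AffineMap.map_vectorSpan,
    AffineSubspace.vectorSpan_eq_top_of_affineSpan_eq_top _ _ _ hspan, Submodule.map_top,
    LinearMap.finrank_range_of_inj closestFamily_linear_injective]
  simp

/-- for `δ = (5,8,9,6,9,9)` (coordinates `(x₁₂,x₁₃,x₁₄,x₂₃,x₂₄,x₃₄)`),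
`d(δ, U₄) = 1`, every `l∞`-closest ultrametric `u` satisfies
`u₁₂ < u₁₃ = u₂₃ < u₁₄ = u₂₄ = u₃₄` (topology `(4(3(12)))`), and the set of closest
ultrametrics is convex of dimension `2`. -/
theorem closest_ultrametrics_dim_two :
    Metric.infDist (ofMat !![0,5,8,9; 5,0,6,9; 8,6,0,9; 9,9,9,0]) (Ultrametrics 4) = 1 ∧
    (∀ u ∈ closestPts (ofMat !![0,5,8,9; 5,0,6,9; 8,6,0,9; 9,9,9,0]) (Ultrametrics 4),
      dm u 0 1 < dm u 0 2 ∧ dm u 0 2 = dm u 1 2 ∧ dm u 0 2 < dm u 0 3 ∧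
      dm u 0 3 = dm u 1 3 ∧ dm u 1 3 = dm u 2 3) ∧
    Convex ℝ (closestPts (ofMat !![0,5,8,9; 5,0,6,9; 8,6,0,9; 9,9,9,0]) (Ultrametrics 4)) ∧
    Module.finrank ℝ (affineSpan ℝ (closestPts
      (ofMat !![0,5,8,9; 5,0,6,9; 8,6,0,9; 9,9,9,0]) (Ultrametrics 4))).direction = 2 := by
  refine ⟨infDist_eq_one, ?_, convex_closestPts, finrank_direction_affineSpan_closestPts⟩
  intro u hu
  rw [closestPts_eq_image_closestFamily] at hu
  obtain ⟨⟨a, s⟩, ⟨ha, hs⟩, rfl⟩ := hu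
  exact ⟨show a < 7 by linarith [ha.2], rfl, show (7 : ℝ) < s by linarith [hs.1], rfl, rfl⟩
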